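/- For discrete random variables X^n = (X(1),...,X(n)) with the X(t) independent, and discrete random variables U^n, one has H(U^n | X^n) ≤ H(U^n) + ∑_{t=1}^n H(X(t) | U(t)) - ∑_{t=1}^n H(X(t)), where U(t) denotes the t-th coordinate of U^n. Equivalently, H(U^n | X^n) ≤ H(U^n) - ∑_{t=1}^n I(X(t); U(t)). -/

import Mathlib

/-- Probability that a discrete random variable `X` on a finite probability space with
mass function `p` takes the value `a`. -/
def probOf {Ω α : Type*} [Fintype Ω] [DecidableEq α] (p : Ω → ℝ) (X : Ω → α) (a : α) : ℝ :=
  ∑ ω, if X ω = a then p ω else 0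

/-- Shannon entropy of a discrete random variable. -/
noncomputable def entropy {Ω α : Type*} [Fintype Ω] [Fintype α] [DecidableEq α]
    (p : Ω → ℝ) (X : Ω → α) : ℝ :=
  -∑ a, probOf p X a * Real.log (probOf p X a)

/-- Conditional entropy `H(X | Y) = H(X, Y) - H(Y)`. -/
noncomputable def condEntropy {Ω α β : Type*} [Fintype Ω] [Fintype α] [Fintype β]
    [DecidableEq α] [DecidableEq β] (p : Ω → ℝ) (X : Ω → α) (Y : Ω → β) : ℝ :=
  entropy p (fun ω => (X ω, Y ω)) - entropy p Y

/-- Mutual information `I(X; Y) = H(X) + H(Y) - H(X, Y)`. -/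
noncomputable def mutualInfo {Ω α β : Type*} [Fintype Ω] [Fintype α] [Fintype β]
    [DecidableEq α] [DecidableEq β] (p : Ω → ℝ) (X : Ω → α) (Y : Ω → β) : ℝ :=
  entropy p X + entropy p Y - entropy p (fun ω => (X ω, Y ω))

section AuxLemmas

variable {Ω α γ δ : Type*} [Fintype Ω] [DecidableEq α] [DecidableEq γ] [DecidableEq δ]
variable (p : Ω → ℝ)

lemma probOf_nonneg (hp : ∀ ω, 0 ≤ p ω) (X : Ω → α) (a : α) : 0 ≤ probOf p X a :=
  Finset.sum_nonneg fun ω _ => by by_cases hX : X ω = a <;> simp [probOf, hX, hp ω]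

lemma sum_probOf [Fintype α] (X : Ω → α) : ∑ a, probOf p X a = ∑ ω, p ω := by
  unfold probOf
  rw [Finset.sum_comm]
  exact Finset.sum_congr rfl fun ω _ => by simp

lemma probOf_comp [Fintype α] (X : Ω → α) (h : α → γ) (c : γ) :
    probOf p (fun ω => h (X ω)) c = ∑ a, if h a = c then probOf p X a else 0 := by
  unfold probOf
  have step1 : ∀ a : α, (if h a = c then (∑ ω, if X ω = a then p ω else 0) else 0)
      = ∑ ω, if h a = c then (if X ω = a then p ω else 0) else 0 := by
    intro a; split <;> simp
  rw [Finset.sum_congr rfl fun a _ => step1 a, Finset.sum_comm]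
  refine Finset.sum_congr rfl fun ω _ => ?_
  rw [Finset.sum_eq_single (X ω)]
  · simp
  · intro b _ hb
    simp [Ne.symm hb]
  · simp

lemma le_probOf_comp [Fintype α] (hp : ∀ ω, 0 ≤ p ω) (X : Ω → α) (h : α → γ) (a : α) :
    probOf p X a ≤ probOf p (fun ω => h (X ω)) (h a) := by
  rw [probOf_comp p X h (h a)]
  have := Finset.single_le_sum (f := fun b => if h b = h a then probOf p X b else 0)
    (s := Finset.univ)
    (fun b _ => by by_cases hb : h b = h a <;> simp [hb, probOf_nonneg p hp])
    (Finset.mem_univ a)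
  simpa using this

lemma sum_probOf_mul_comp [Fintype α] [Fintype γ] (X : Ω → α) (h : α → γ) (g : γ → ℝ) :
    ∑ a, probOf p X a * g (h a) = ∑ c, probOf p (fun ω => h (X ω)) c * g c := by
  have key : ∀ c : γ, probOf p (fun ω => h (X ω)) c * g c
      = ∑ a, if h a = c then probOf p X a * g c else 0 := by
    intro c
    rw [probOf_comp, Finset.sum_mul]
    exact Finset.sum_congr rfl fun a _ => by split <;> simp
  rw [Finset.sum_congr rfl fun c _ => key c, Finset.sum_comm]
  refine Finset.sum_congr rfl fun a _ => ?_
  rw [Finset.sum_eq_single (h a)]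
  · simp
  · intro c _ hc; simp [Ne.symm hc]
  · simp

lemma probOf_fst [Fintype δ] (Y : Ω → γ) (Z : Ω → δ) (b : γ) :
    ∑ a, probOf p (fun ω => (Y ω, Z ω)) (b, a) = probOf p Y b := by
  unfold probOf
  rw [Finset.sum_comm]
  refine Finset.sum_congr rfl fun ω _ => ?_
  by_cases hY : Y ω = b <;> simp [Prod.ext_iff, hY]

lemma entropy_comp_equiv [Fintype α] [Fintype γ] (X : Ω → α) (e : α ≃ γ) :
    entropy p (fun ω => e (X ω)) = entropy p X := by
  unfold entropy
  congr 1
  rw [← Equiv.sum_comp e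
    (fun c => probOf p (fun ω => e (X ω)) c * Real.log (probOf p (fun ω => e (X ω)) c))]
  refine Finset.sum_congr rfl fun a _ => ?_
  have : probOf p (fun ω => e (X ω)) (e a) = probOf p X a := by
    unfold probOf
    exact Finset.sum_congr rfl fun ω _ => by simp
  rw [this]

lemma gibbs {ι : Type*} [Fintype ι] (r q : ι → ℝ) (hr : ∀ i, 0 ≤ r i) (hr1 : ∑ i, r i = 1)
    (hq : ∀ i, 0 ≤ q i) (hq1 : ∑ i, q i ≤ 1) (hrq : ∀ i, 0 < r i → 0 < q i) :
    -∑ i, r i * Real.log (r i) ≤ -∑ i, r i * Real.log (q i) := by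
  have key : ∀ i, r i * Real.log (q i) - r i * Real.log (r i) ≤ q i - r i := by
    intro i
    rcases (hr i).eq_or_lt with h | h
    · simp only [← h, zero_mul, sub_zero, sub_self]
      simpa using hq i
    · have hqi := hrq i h
      have hlog : Real.log (q i) - Real.log (r i) = Real.log (q i / r i) :=
        (Real.log_div hqi.ne' h.ne').symm
      have hb := Real.log_le_sub_one_of_pos (div_pos hqi h)
      calc r i * Real.log (q i) - r i * Real.log (r i)
          = r i * Real.log (q i / r i) := by rw [← hlog]; ring
        _ ≤ r i * (q i / r i - 1) := mul_le_mul_of_nonneg_left hb h.le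
        _ = q i - r i := by field_simp
  have hsum : ∑ i, (r i * Real.log (q i) - r i * Real.log (r i)) ≤ ∑ i, (q i - r i) :=
    Finset.sum_le_sum fun i _ => key i
  rw [Finset.sum_sub_distrib, Finset.sum_sub_distrib, hr1] at hsum
  linarith

end AuxLemmas

theorem stmt_11 {Ω α β : Type*} [Fintype Ω] [Fintype α] [Fintype β]
    [DecidableEq α] [DecidableEq β]
    (n : ℕ) (p : Ω → ℝ) (hp : ∀ ω, 0 ≤ p ω) (hp1 : ∑ ω, p ω = 1)
    (X : Ω → Fin n → α) (U : Ω → Fin n → β)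
    (hXindep : ∀ f : Fin n → α,
      probOf p X f = ∏ t, probOf p (fun ω => X ω t) (f t)) :
    condEntropy p U X ≤
      entropy p U - ∑ t, mutualInfo p (fun ω => X ω t) (fun ω => U ω t) := by
  classical
  -- names
  set r : (Fin n → β) × (Fin n → α) → ℝ := probOf p (fun ω => (U ω, X ω)) with hr_def
  set pU : (Fin n → β) → ℝ := probOf p U with hpU_def
  set mu : Fin n → β → ℝ := fun t b => probOf p (fun ω => U ω t) b with hmu_def
  set m : Fin n → β × α → ℝ := fun t ba => probOf p (fun ω => (U ω t, X ω t)) ba with hm_def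
  set cond : Fin n → β → α → ℝ :=
    fun t b a => if mu t b = 0 then 0 else m t (b, a) / mu t b with hcond_def
  set q : (Fin n → β) × (Fin n → α) → ℝ :=
    fun w => pU w.1 * ∏ t, cond t (w.1 t) (w.2 t) with hq_def
  -- basic facts
  have hr0 : ∀ w, 0 ≤ r w := fun w => probOf_nonneg p hp _ w
  have hr1 : ∑ w, r w = 1 := by rw [hr_def, sum_probOf, hp1]
  have hm0 : ∀ t ba, 0 ≤ m t ba := fun t ba => probOf_nonneg p hp _ ba
  have hmu0 : ∀ t b, 0 ≤ mu t b := fun t b => probOf_nonneg p hp _ b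
  have hpU0 : ∀ u, 0 ≤ pU u := fun u => probOf_nonneg p hp _ u
  have hcond0 : ∀ t b a, 0 ≤ cond t b a := by
    intro t b a
    rw [hcond_def]
    dsimp only
    split
    · exact le_refl 0
    · exact div_nonneg (hm0 t (b, a)) (hmu0 t b)
  have hq0 : ∀ w, 0 ≤ q w :=
    fun w => mul_nonneg (hpU0 w.1) (Finset.prod_nonneg fun t _ => hcond0 t _ _)
  -- marginal inequalities
  have hle_pU : ∀ u x, r (u, x) ≤ pU u := by
    intro u x
    exact le_probOf_comp p hp (fun ω => (U ω, X ω)) Prod.fst (u, x)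
  have hle_mu : ∀ u x t, r (u, x) ≤ mu t (u t) := by
    intro u x t
    exact le_probOf_comp p hp (fun ω => (U ω, X ω)) (fun w => w.1 t) (u, x)
  have hle_m : ∀ u x t, r (u, x) ≤ m t (u t, x t) := by
    intro u x t
    exact le_probOf_comp p hp (fun ω => (U ω, X ω)) (fun w => (w.1 t, w.2 t)) (u, x)
  -- row sums of cond
  have hcond_sum : ∀ t b, ∑ a, cond t b a = if mu t b = 0 then 0 else 1 := by
    intro t b
    by_cases h : mu t b = 0
    · simp [hcond_def, h]
    · rw [if_neg h]
      have : ∑ a, cond t b a = (∑ a, m t (b, a)) / mu t b := by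
        rw [Finset.sum_div]
        exact Finset.sum_congr rfl fun a _ => by simp [hcond_def, h]
      rw [this, hm_def, hmu_def]
      rw [probOf_fst p (fun ω => U ω t) (fun ω => X ω t) b]
      exact div_self h
  -- total mass of q
  have hq1 : ∑ w, q w ≤ 1 := by
    have expand : ∑ w : (Fin n → β) × (Fin n → α), q w
        = ∑ u, pU u * ∏ t, ∑ a, cond t (u t) a := by
      rw [Fintype.sum_prod_type]
      refine Finset.sum_congr rfl fun u _ => ?_
      rw [hq_def]
      dsimp only
      rw [← Finset.mul_sum]
      congr 1
      rw [show (∏ t, ∑ a, cond t (u t) a) = ∑ x : Fin n → α, ∏ t, cond t (u t) (x t) from by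
        rw [Finset.prod_univ_sum (fun _ => Finset.univ) (fun t a => cond t (u t) a),
          Fintype.piFinset_univ]]
    rw [expand]
    calc ∑ u, pU u * ∏ t, ∑ a, cond t (u t) a ≤ ∑ u, pU u := by
          refine Finset.sum_le_sum fun u _ => ?_
          refine mul_le_of_le_one_right (hpU0 u) ?_
          refine Finset.prod_le_one (fun t _ => ?_) (fun t _ => ?_)
          · rw [hcond_sum t (u t)]; split <;> norm_num
          · rw [hcond_sum t (u t)]; split <;> norm_num
      _ = 1 := by rw [hpU_def, sum_probOf, hp1]
  -- positivity transfer
  have hrq : ∀ w, 0 < r w → 0 < q w := by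
    rintro ⟨u, x⟩ hpos
    have h1 : 0 < pU u := lt_of_lt_of_le hpos (hle_pU u x)
    have h2 : ∀ t, 0 < mu t (u t) := fun t => lt_of_lt_of_le hpos (hle_mu u x t)
    have h3 : ∀ t, 0 < m t (u t, x t) := fun t => lt_of_lt_of_le hpos (hle_m u x t)
    refine mul_pos h1 (Finset.prod_pos fun t _ => ?_)
    rw [hcond_def]
    dsimp only
    rw [if_neg (h2 t).ne']
    exact div_pos (h3 t) (h2 t)
  -- cross-entropy identity (termwise)
  have hterm : ∀ w : (Fin n → β) × (Fin n → α), r w * Real.log (q w)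
      = r w * Real.log (pU w.1)
        + ∑ t, (r w * Real.log (m t (w.1 t, w.2 t)) - r w * Real.log (mu t (w.1 t))) := by
    rintro ⟨u, x⟩
    rcases (hr0 (u, x)).eq_or_lt with h | h
    · simp [← h]
    · have h1 : 0 < pU u := lt_of_lt_of_le h (hle_pU u x)
      have h2 : ∀ t, 0 < mu t (u t) := fun t => lt_of_lt_of_le h (hle_mu u x t)
      have h3 : ∀ t, 0 < m t (u t, x t) := fun t => lt_of_lt_of_le h (hle_m u x t)
      have hcond_eq : ∀ t, cond t (u t) (x t) = m t (u t, x t) / mu t (u t) := by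
        intro t; rw [hcond_def]; dsimp only; rw [if_neg (h2 t).ne']
      have hprod_pos : 0 < ∏ t, cond t (u t) (x t) := by
        refine Finset.prod_pos fun t _ => ?_
        rw [hcond_eq t]; exact div_pos (h3 t) (h2 t)
      have hlogq : Real.log (q (u, x))
          = Real.log (pU u) + ∑ t, (Real.log (m t (u t, x t)) - Real.log (mu t (u t))) := by
        rw [hq_def]
        dsimp only
        rw [Real.log_mul h1.ne' hprod_pos.ne']
        congr 1
        rw [Real.log_prod (fun t _ => by
          rw [hcond_eq t]; exact (div_pos (h3 t) (h2 t)).ne')]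
        refine Finset.sum_congr rfl fun t _ => ?_
        rw [hcond_eq t, Real.log_div (h3 t).ne' (h2 t).ne']
      rw [hlogq, mul_add, Finset.mul_sum]
      congr 1
      exact Finset.sum_congr rfl fun t _ => by ring
  -- cross-entropy identity (summed)
  have hcross : ∑ w, r w * Real.log (q w)
      = (∑ u, pU u * Real.log (pU u))
        + ∑ t, ((∑ ba, m t ba * Real.log (m t ba)) - (∑ b, mu t b * Real.log (mu t b))) := by
    rw [Finset.sum_congr rfl fun w _ => hterm w, Finset.sum_add_distrib]
    congr 1
    · exact sum_probOf_mul_comp p (fun ω => (U ω, X ω)) Prod.fst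
        (fun u => Real.log (pU u))
    · rw [Finset.sum_comm]
      refine Finset.sum_congr rfl fun t _ => ?_
      rw [Finset.sum_sub_distrib]
      congr 1
      · exact sum_probOf_mul_comp p (fun ω => (U ω, X ω)) (fun w => (w.1 t, w.2 t))
          (fun ba => Real.log (m t ba))
      · exact sum_probOf_mul_comp p (fun ω => (U ω, X ω)) (fun w => w.1 t)
          (fun b => Real.log (mu t b))
  -- Gibbs
  have hgibbs : entropy p (fun ω => (U ω, X ω))
      ≤ entropy p U + ∑ t, (entropy p (fun ω => (U ω t, X ω t))
          - entropy p (fun ω => U ω t)) := by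
    have := gibbs r q hr0 hr1 hq0 hq1 hrq
    rw [hcross] at this
    have hU : entropy p U = -∑ u, pU u * Real.log (pU u) := rfl
    have hJ : entropy p (fun ω => (U ω, X ω)) = -∑ w, r w * Real.log (r w) := rfl
    have hMt : ∀ t, entropy p (fun ω => (U ω t, X ω t)) = -∑ ba, m t ba * Real.log (m t ba) :=
      fun t => rfl
    have hmut : ∀ t, entropy p (fun ω => U ω t) = -∑ b, mu t b * Real.log (mu t b) :=
      fun t => rfl
    have hsum_t : (∑ t, (entropy p (fun ω => (U ω t, X ω t)) - entropy p (fun ω => U ω t)))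
        = ∑ t, ((-∑ ba, m t ba * Real.log (m t ba)) - (-∑ b, mu t b * Real.log (mu t b))) :=
      Finset.sum_congr rfl fun t _ => by rw [hMt t, hmut t]
    rw [hU, hJ, hsum_t]
    calc -∑ w, r w * Real.log (r w)
        ≤ -((∑ u, pU u * Real.log (pU u))
          + ∑ t, ((∑ ba, m t ba * Real.log (m t ba)) - (∑ b, mu t b * Real.log (mu t b)))) :=
          this
      _ = (-∑ u, pU u * Real.log (pU u))
          + ∑ t, ((-∑ ba, m t ba * Real.log (m t ba)) - (-∑ b, mu t b * Real.log (mu t b))) := by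
          have h2 : ∑ t, ((-∑ ba, m t ba * Real.log (m t ba))
                - (-∑ b, mu t b * Real.log (mu t b)))
              = -∑ t, ((∑ ba, m t ba * Real.log (m t ba))
                - (∑ b, mu t b * Real.log (mu t b))) := by
            rw [← Finset.sum_neg_distrib]
            exact Finset.sum_congr rfl fun t _ => by ring
          rw [h2]
          ring
  -- independence: H(X) = ∑ H(X_t)
  have hindep : entropy p X = ∑ t, entropy p (fun ω => X ω t) := by
    have hterm2 : ∀ f : Fin n → α, probOf p X f * Real.log (probOf p X f)
        = ∑ t, probOf p X f * Real.log (probOf p (fun ω => X ω t) (f t)) := by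
      intro f
      by_cases h0 : probOf p X f = 0
      · simp [h0]
      · have hfac : ∀ t, probOf p (fun ω => X ω t) (f t) ≠ 0 := by
          intro t hz
          apply h0
          rw [hXindep f]
          exact Finset.prod_eq_zero (Finset.mem_univ t) hz
        have hlog : Real.log (probOf p X f)
            = ∑ t, Real.log (probOf p (fun ω => X ω t) (f t)) := by
          rw [hXindep f]
          exact Real.log_prod fun t _ => hfac t
        rw [hlog, Finset.mul_sum]
    unfold entropy
    rw [Finset.sum_congr rfl fun f _ => hterm2 f, Finset.sum_comm, ← Finset.sum_neg_distrib]
    refine Finset.sum_congr rfl fun t _ => ?_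
    congr 1
    exact sum_probOf_mul_comp p X (fun f => f t)
      (fun a => Real.log (probOf p (fun ω => X ω t) a))
  -- swap pairs in mutualInfo
  have hswap : ∀ t : Fin n, entropy p (fun ω => (X ω t, U ω t))
      = entropy p (fun ω => (U ω t, X ω t)) := by
    intro t
    exact (entropy_comp_equiv p (fun ω => (X ω t, U ω t)) (Equiv.prodComm α β)).symm
  -- final assembly
  have hMI : (∑ t, (entropy p (fun ω => X ω t) + entropy p (fun ω => U ω t)
        - entropy p (fun ω => (X ω t, U ω t))))
      = ∑ t, (entropy p (fun ω => X ω t) + entropy p (fun ω => U ω t)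
        - entropy p (fun ω => (U ω t, X ω t))) :=
    Finset.sum_congr rfl fun t _ => by rw [hswap t]
  unfold condEntropy mutualInfo
  rw [hindep, hMI]
  have := hgibbs
  rw [Finset.sum_sub_distrib] at this ⊢
  rw [Finset.sum_add_distrib]
  linarith
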